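/- For 1 ≤ z ≤ h-1 ≤ n-1, R_n(h,z+1) - R_n(h,z) = q_n(h-z-1, h) = f(h-z-1, h-1)·f(n-h, n-h+z+1)/Cat(n), where R_n and q_n are as defined from uniform paths in Cat(n). -/

import Mathlib

open Finset

/-- Number of steps equal to `v` among the first `i` steps of `f`
(`false` = right-step, `true` = up-step). -/
def pref {m : ℕ} (f : Fin m → Bool) (i : ℕ) (v : Bool) : ℕ :=
  (univ.filter (fun j : Fin m => (j : ℕ) < i ∧ f j = v)).card

/-- `f` encodes a lattice path from `(0,0)` to `(a,b)` (with `false` = right-step,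
`true` = up-step) that stays weakly above the diagonal `y = x`. -/
def IsPath (a b : ℕ) (f : Fin (a + b) → Bool) : Prop :=
  pref f (a + b) false = a ∧ ∀ i ≤ a + b, pref f i false ≤ pref f i true

instance (a b : ℕ) : DecidablePred (IsPath a b) := fun f => by
  unfold IsPath; exact inferInstance

/-- The number of lattice paths from `(0,0)` to `(a,b)` staying weakly above `y = x`. -/
def pathCount (a b : ℕ) : ℕ := (univ.filter (IsPath a b)).card
/-- The x-coordinate of the unique up-step of the path `f` from height `h-1` to height `h`:
the number of right-steps taken before the `h`-th up-step. -/
def upX (n h : ℕ) (f : Fin (n + n) → Bool) : ℕ :=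
  (univ.filter (fun i : Fin (n + n) => f i = false ∧ pref f (i : ℕ) true < h)).card

/-- `R_n(h,z)`: the probability that a uniform path in `Cat(n)` has its up-step from
height `h-1` to height `h` at x-coordinate `≥ h - z`. -/
noncomputable def Rpath (n h z : ℕ) : ℝ :=
  ((univ.filter (fun f : Fin (n + n) → Bool =>
      IsPath n n f ∧ h - z ≤ upX n h f)).card : ℝ) / (pathCount n n)
/-- The ballot number `f(a,b) = C(a+b,a) - C(a+b,a-1)`, with the convention
`C(m,-1) = 0` (case `a = 0`). -/
def ballotZ (a b : ℕ) : ℤ :=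
  (a + b).choose a - (if a = 0 then 0 else (a + b).choose (a - 1))

/-- The ballot number `f(a,b) = C(a+b,a) - C(a+b,a-1)` as a natural number,
with the convention `C(m,-1) = 0` (case `a = 0`). -/
def ballotN (a b : ℕ) : ℕ :=
  (a + b).choose a - (if a = 0 then 0 else (a + b).choose (a - 1))

/-- The Catalan number `Cat(n) = C(2n,n)/(n+1)`. -/
def CatN (n : ℕ) : ℕ := (2 * n).choose n / (n + 1)

/-- `q_n(a,b)`: the probability that a uniform path in `Cat(n)` passes through both
`(a,b-1)` and `(a,b)`, i.e. contains the up-step from `(a,b-1)` to `(a,b)`. -/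
noncomputable def qprob (n a b : ℕ) : ℝ :=
  ((univ.filter (fun f : Fin (n + n) → Bool => IsPath n n f ∧
      pref f (a + b - 1) false = a ∧ pref f (a + b) false = a)).card : ℝ) /
    (pathCount n n : ℝ)

/-!
The up-step of a Dyck path from height `h - 1` to `h` is unique, so `R_n(h, z + 1) - R_n(h, z)`
counts the paths whose up-step sits exactly at `x = h - z - 1`, i.e. the paths through the step
`(h - z - 1, h - 1) → (h - z - 1, h)`, which is `q_n(h - z - 1, h)`. Cutting such a path at
that step leaves a ballot path to `(h - z - 1, h - 1)` and a path from `(h - z - 1, h)` to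
`(n, n)` above the diagonal. Both are instances of paths with `a` right-steps among `m` steps
staying above `y = x - d`, which the reflection principle counts as
`C(m, a) - C(m, a - d - 1)`; here that formula is checked against the last-step recurrence.
-/

section Pref

variable {m : ℕ} (f : Fin m → Bool)

lemma pref_zero (v : Bool) : pref f 0 v = 0 := by
  simp [pref]

lemma pref_succ {i : ℕ} (hi : i < m) (v : Bool) :
    pref f (i + 1) v = pref f i v + if f ⟨i, hi⟩ = v then 1 else 0 := by
  unfold pref
  split_ifs with hv
  · rw [← card_insert_of_notMem (a := ⟨i, hi⟩) (by simp)]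
    congr 1
    ext j
    simp only [mem_filter, mem_univ, true_and, mem_insert, Fin.ext_iff]
    grind
  · rw [add_zero]
    congr 1
    ext j
    simp only [mem_filter, mem_univ, true_and]
    grind

lemma pref_succ_false_eq_iff {i : ℕ} (hi : i < m) :
    pref f (i + 1) false = pref f i false ↔ f ⟨i, hi⟩ = true := by
  rw [pref_succ f hi]
  cases f ⟨i, hi⟩ <;> simp

lemma pref_mono {i j : ℕ} (hij : i ≤ j) (v : Bool) : pref f i v ≤ pref f j v :=
  card_le_card <| monotone_filter_right _ fun _ _ hk => ⟨hk.1.trans_le hij, hk.2⟩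

lemma pref_false_add_pref_true {i : ℕ} (hi : i ≤ m) : pref f i false + pref f i true = i := by
  induction i with
  | zero => simp [pref_zero]
  | succ i ih =>
    have := ih (by omega)
    rw [pref_succ f hi, pref_succ f hi]
    cases f ⟨i, hi⟩ <;> simp <;> omega

end Pref

section Append

variable {k l : ℕ} (g₁ : Fin k → Bool) (g₂ : Fin l → Bool) (w : Bool)

lemma pref_append_of_le {i : ℕ} (hi : i ≤ k) : pref (Fin.append g₁ g₂) i w = pref g₁ i w := by
  simp only [pref, card_filter, Fin.sum_univ_add, Fin.append_left, Fin.append_right,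
    Fin.val_castAdd, Fin.val_natAdd]
  simp [show ∀ j : Fin l, ¬ k + (j : ℕ) < i by omega]

lemma pref_append_add (i : ℕ) :
    pref (Fin.append g₁ g₂) (k + i) w = pref g₁ k w + pref g₂ i w := by
  simp only [pref, card_filter, Fin.sum_univ_add, Fin.append_left, Fin.append_right,
    Fin.val_castAdd, Fin.val_natAdd, add_lt_add_iff_left]
  congr 1
  exact sum_congr rfl fun j _ => by simp [show (j : ℕ) < k + i by omega, j.isLt]

lemma pref_snoc_of_le {i : ℕ} (hi : i ≤ k) (v : Bool) :
    pref (Fin.snoc g₁ w) i v = pref g₁ i v := by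
  rw [← Fin.append_right_eq_snoc g₁ fun _ => w, pref_append_of_le _ _ _ hi]

lemma pref_snoc_last (v : Bool) :
    pref (Fin.snoc g₁ w) (k + 1) v = pref g₁ k v + if w = v then 1 else 0 := by
  rw [← Fin.append_right_eq_snoc g₁ fun _ => w, pref_append_add, pref_succ _ zero_lt_one,
    pref_zero, zero_add]

end Append

lemma card_filter_snoc {k : ℕ} (Q : (Fin (k + 1) → Bool) → Prop) [DecidablePred Q] :
    #{f | Q f} = #{g : Fin k → Bool | Q (Fin.snoc g true)} + #{g | Q (Fin.snoc g false)} := by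
  simp only [card_filter]
  rw [← (Fin.snocEquiv fun _ => Bool).sum_comp, Fintype.sum_prod_type, Fintype.sum_bool]
  rfl

lemma card_filter_append {k l : ℕ} (Q : (Fin (k + l) → Bool) → Prop) [DecidablePred Q]
    (A : (Fin k → Bool) → Prop) [DecidablePred A] (B : (Fin l → Bool) → Prop) [DecidablePred B]
    (hQ : ∀ g₁ g₂, Q (Fin.append g₁ g₂) ↔ A g₁ ∧ B g₂) :
    #{f | Q f} = #{g | A g} * #{g | B g} := by
  rw [← card_product]
  refine (card_equiv (Fin.appendEquiv k l) fun p => ?_).symm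
  simp only [mem_product, mem_filter, mem_univ, true_and]
  exact (hQ p.1 p.2).symm

/-- A path with `a` right-steps that stays weakly above the line `y = x - d`. -/
def IsShiftedPath (d a : ℕ) {m : ℕ} (f : Fin m → Bool) : Prop :=
  pref f m false = a ∧ ∀ i ≤ m, pref f i false ≤ pref f i true + d

instance (d a m : ℕ) : DecidablePred (IsShiftedPath d a (m := m)) := fun _ => by
  unfold IsShiftedPath; infer_instance

def shiftedPathCount (d a m : ℕ) : ℕ := #{f : Fin m → Bool | IsShiftedPath d a f}

section Snoc

variable {d a k : ℕ} (g : Fin k → Bool)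

lemma isShiftedPath_snoc_true : IsShiftedPath d a (Fin.snoc g true) ↔ IsShiftedPath d a g := by
  simp only [IsShiftedPath, Nat.le_succ_iff, or_imp, forall_and, forall_eq, pref_snoc_last,
    Bool.true_eq_false, if_false, if_true, add_zero]
  constructor
  · rintro ⟨hg, hle, -⟩
    exact ⟨hg, fun i hi => by simpa only [pref_snoc_of_le g true hi] using hle i hi⟩
  · rintro ⟨hg, hle⟩
    refine ⟨hg, fun i hi => by simpa only [pref_snoc_of_le g true hi] using hle i hi, ?_⟩
    have := hle k le_rfl
    omega

lemma not_isShiftedPath_zero_snoc_false : ¬ IsShiftedPath d 0 (Fin.snoc g false) := by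
  simp [IsShiftedPath, pref_snoc_last]

lemma isShiftedPath_succ_snoc_false :
    IsShiftedPath d (a + 1) (Fin.snoc g false) ↔ IsShiftedPath d a g ∧ 2 * a + 1 ≤ d + k := by
  simp only [IsShiftedPath, Nat.le_succ_iff, or_imp, forall_and, forall_eq, pref_snoc_last,
    Bool.false_eq_true, if_false, if_true, add_zero, add_left_inj]
  have htot := pref_false_add_pref_true g le_rfl
  constructor
  · rintro ⟨hg, hle, hlast⟩
    exact ⟨⟨hg, fun i hi => by simpa only [pref_snoc_of_le g false hi] using hle i hi⟩, by omega⟩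
  · rintro ⟨⟨hg, hle⟩, hk⟩
    exact ⟨hg, fun i hi => by simpa only [pref_snoc_of_le g false hi] using hle i hi, by omega⟩

end Snoc

lemma shiftedPathCount_succ_zero (d a : ℕ) : shiftedPathCount d (a + 1) 0 = 0 := by
  simp [shiftedPathCount, IsShiftedPath, pref_zero]

lemma shiftedPathCount_zero (d m : ℕ) : shiftedPathCount d 0 m = 1 := by
  induction m with
  | zero => simp [shiftedPathCount, IsShiftedPath, pref_zero]
  | succ k ih =>
    rw [shiftedPathCount, card_filter_snoc]
    simpa [isShiftedPath_snoc_true, not_isShiftedPath_zero_snoc_false, shiftedPathCount] using ih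

lemma shiftedPathCount_succ_succ (d a k : ℕ) :
    shiftedPathCount d (a + 1) (k + 1) =
      shiftedPathCount d (a + 1) k + if 2 * a + 1 ≤ d + k then shiftedPathCount d a k else 0 := by
  rw [shiftedPathCount, card_filter_snoc]
  simp only [isShiftedPath_snoc_true, isShiftedPath_succ_snoc_false]
  split_ifs with h <;> simp [h, shiftedPathCount]

/-- The reflection-principle count of `IsShiftedPath d a` paths of length `m`. The subtracted
term is `m.choose (a - d - 1)` written through symmetry, so that it vanishes for `a ≤ d` in spite
of truncated subtraction. -/
def shiftedBallot (d a m : ℕ) : ℤ :=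
  if 2 * a ≤ d + m then m.choose a - m.choose (m + d + 1 - a) else 0

lemma shiftedBallot_zero (d m : ℕ) : shiftedBallot d 0 m = 1 := by
  simp [shiftedBallot, Nat.choose_eq_zero_of_lt (show m < m + d + 1 by omega)]

lemma shiftedBallot_succ_succ (d a k : ℕ) :
    shiftedBallot d (a + 1) (k + 1) =
      shiftedBallot d (a + 1) k + if 2 * a + 1 ≤ d + k then shiftedBallot d a k else 0 := by
  unfold shiftedBallot
  by_cases h : 2 * a + 1 ≤ d + k
  · have pascal₁ : ((k + 1).choose (a + 1) : ℤ) = k.choose a + k.choose (a + 1) := by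
      exact_mod_cast Nat.choose_succ_succ' k a
    have pascal₂ : ((k + 1).choose (k + d + 1 - a) : ℤ) =
        k.choose (k + d - a) + k.choose (k + d + 1 - a) := by
      rw [show k + d + 1 - a = k + d - a + 1 by omega]
      exact_mod_cast Nat.choose_succ_succ' k (k + d - a)
    rw [if_pos (show 2 * (a + 1) ≤ d + (k + 1) by omega), if_pos h,
      if_pos (show 2 * a ≤ d + k by omega), show k + 1 + d + 1 - (a + 1) = k + d + 1 - a by omega,
      show k + d + 1 - (a + 1) = k + d - a by omega, pascal₁, pascal₂]
    split_ifs with h'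
    · ring
    · rw [show k + d - a = a + 1 by omega]
      ring
  · simp only [if_neg h, if_neg (show ¬ 2 * (a + 1) ≤ d + (k + 1) by omega),
      if_neg (show ¬ 2 * (a + 1) ≤ d + k by omega), add_zero]

theorem shiftedPathCount_eq_shiftedBallot (d a m : ℕ) :
    (shiftedPathCount d a m : ℤ) = shiftedBallot d a m := by
  induction m generalizing a with
  | zero =>
    cases a with
    | zero => simp [shiftedPathCount_zero, shiftedBallot_zero]
    | succ a =>
      rw [shiftedPathCount_succ_zero, shiftedBallot]
      split_ifs
      · simp [Nat.choose_eq_zero_of_lt (show 0 < d - a by omega)]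
      · rfl
  | succ k ih =>
    cases a with
    | zero => simp [shiftedPathCount_zero, shiftedBallot_zero]
    | succ a =>
      rw [shiftedPathCount_succ_succ, shiftedBallot_succ_succ, ← ih, ← ih]
      split_ifs <;> push_cast <;> rfl

lemma shiftedPathCount_add {d a t : ℕ} (h : a ≤ t + d) :
    shiftedPathCount d a (a + t) = (a + t).choose a - (a + t).choose (t + d + 1) := by
  have := shiftedPathCount_eq_shiftedBallot d a (a + t)
  rw [shiftedBallot, if_pos (by omega), show a + t + d + 1 - a = t + d + 1 by omega] at this
  omega

lemma ballotN_eq_choose_sub (a b : ℕ) :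
    ballotN a b = (a + b).choose a - (a + b).choose (b + 1) := by
  unfold ballotN
  split_ifs with ha
  · subst ha
    simp
  · rw [Nat.choose_symm_of_eq_add (show a + b = a - 1 + (b + 1) by omega)]

lemma shiftedPathCount_zero_eq_ballotN {a b : ℕ} (hab : a ≤ b) :
    shiftedPathCount 0 a (a + b) = ballotN a b := by
  rw [shiftedPathCount_add (by omega), ballotN_eq_choose_sub]

lemma shiftedPathCount_sub_eq_ballotN {s t : ℕ} (hts : t ≤ s) :
    shiftedPathCount (s - t) s (s + t) = ballotN t s := by
  rw [shiftedPathCount_add (by omega), ballotN_eq_choose_sub, show t + (s - t) + 1 = s + 1 by omega,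
    add_comm t s, Nat.choose_symm_add]

lemma pathCount_eq_shiftedPathCount (a b : ℕ) : pathCount a b = shiftedPathCount 0 a (a + b) :=
  rfl

lemma succ_mul_pathCount (n : ℕ) : (n + 1) * pathCount n n = (2 * n).choose n := by
  rw [pathCount_eq_shiftedPathCount, shiftedPathCount_zero_eq_ballotN le_rfl,
    ballotN_eq_choose_sub, two_mul]
  have key := Nat.choose_succ_right_eq (n + n) n
  rw [Nat.add_sub_cancel] at key
  have hle : (n + n).choose (n + 1) ≤ (n + n).choose n :=
    Nat.le_of_mul_le_mul_right (key ▸ Nat.mul_le_mul_left _ n.le_succ) n.succ_pos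
  zify [hle] at key ⊢
  linear_combination (-1 : ℤ) * key

lemma pathCount_eq_CatN (n : ℕ) : pathCount n n = CatN n := by
  rw [CatN, ← succ_mul_pathCount, Nat.mul_div_cancel_left _ n.succ_pos]

lemma isShiftedPath_append_iff {d a c k l : ℕ} (g₁ : Fin k → Bool) (g₂ : Fin l → Bool)
    (hg₁ : pref g₁ k false = a) (hac : a ≤ c) :
    IsShiftedPath d c (Fin.append g₁ g₂) ↔
      IsShiftedPath d a g₁ ∧ IsShiftedPath (d + (k - a) - a) (c - a) g₂ := by
  have htot := pref_false_add_pref_true g₁ le_rfl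
  have hsplit := pref_append_add g₁ g₂
  unfold IsShiftedPath
  constructor
  · rintro ⟨hc, hle⟩
    have hle₁ : ∀ i ≤ k, pref g₁ i false ≤ pref g₁ i true + d := fun i hi => by
      simpa only [pref_append_of_le g₁ g₂ _ hi] using hle i (by omega)
    have hk := hle₁ k le_rfl
    refine ⟨⟨hg₁, hle₁⟩, by have := hsplit false l; omega, fun j hj => ?_⟩
    have := hle (k + j) (by omega)
    rw [hsplit, hsplit] at this
    omega
  · rintro ⟨⟨-, hle₁⟩, hc₂, hle₂⟩
    have hk := hle₁ k le_rfl
    refine ⟨by have := hsplit false l; omega, fun i hi => ?_⟩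
    rcases le_or_gt i k with hik | hki
    · simpa only [pref_append_of_le g₁ g₂ _ hik] using hle₁ i hik
    · obtain ⟨j, rfl⟩ := Nat.exists_eq_add_of_le hki.le
      have := hle₂ j (by omega)
      rw [hsplit, hsplit]
      omega

lemma card_isShiftedPath_last_true (d a k : ℕ) :
    #{f : Fin (k + 1) → Bool | IsShiftedPath d a f ∧ f (Fin.last k) = true} =
      shiftedPathCount d a k := by
  rw [card_filter_snoc]
  simp [isShiftedPath_snoc_true, shiftedPathCount]

theorem card_isShiftedPath_through_upStep {d c a k l m : ℕ} (hm : k + 1 + l = m) (hac : a ≤ c) :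
    #{f : Fin m → Bool | IsShiftedPath d c f ∧ pref f k false = a ∧ pref f (k + 1) false = a} =
      shiftedPathCount d a k * shiftedPathCount (d + (k + 1 - a) - a) (c - a) l := by
  subst hm
  rw [card_filter_append _ (fun g => IsShiftedPath d a g ∧ g (Fin.last k) = true)
    (IsShiftedPath (d + (k + 1 - a) - a) (c - a)), card_isShiftedPath_last_true]
  · rfl
  intro g₁ g₂
  rw [pref_append_of_le _ _ _ k.le_succ, pref_append_of_le _ _ _ le_rfl]
  have hstep := pref_succ_false_eq_iff g₁ k.lt_succ_self
  constructor
  · rintro ⟨hp, hk, hk₁⟩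
    obtain ⟨hp₁, hp₂⟩ := (isShiftedPath_append_iff g₁ g₂ hk₁ hac).1 hp
    exact ⟨⟨hp₁, hstep.1 (hk₁.trans hk.symm)⟩, hp₂⟩
  · rintro ⟨⟨hp₁, hlast⟩, hp₂⟩
    exact ⟨(isShiftedPath_append_iff g₁ g₂ hp₁.1 hac).2 ⟨hp₁, hp₂⟩,
      (hstep.2 hlast).symm.trans hp₁.1, hp₁.1⟩

lemma exists_upStep {m h : ℕ} (f : Fin m → Bool) (hh : 1 ≤ h) (hf : h ≤ pref f m true) :
    ∃ t, ∃ ht : t < m, f ⟨t, ht⟩ = true ∧ pref f t true + 1 = h := by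
  have hex : ∃ t, h ≤ pref f t true := ⟨m, hf⟩
  obtain ⟨t, ht⟩ : ∃ t, Nat.find hex = t + 1 :=
    Nat.exists_eq_succ_of_ne_zero fun h0 => by
      have := Nat.find_spec hex
      rw [h0, pref_zero] at this
      omega
  have hreach : h ≤ pref f (t + 1) true := ht ▸ Nat.find_spec hex
  have hbefore : pref f t true < h := not_le.1 (Nat.find_min hex (by omega))
  have htm : t < m := by
    by_contra! hmt
    have := pref_mono f hmt true
    have := Nat.find_min' hex hf
    omega
  rw [pref_succ f htm] at hreach
  refine ⟨t, htm, ?_⟩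
  cases hft : f ⟨t, htm⟩
  · simp [hft] at hreach
    omega
  · simp only [hft, if_true] at hreach
    exact ⟨rfl, by omega⟩

lemma upX_eq_of_upStep {n h t : ℕ} (f : Fin (n + n) → Bool) (ht : t < n + n)
    (hft : f ⟨t, ht⟩ = true) (hpt : pref f t true + 1 = h) : upX n h f = pref f t false := by
  have hnext : pref f (t + 1) true = h := by simp [pref_succ f ht, hft, hpt]
  unfold upX
  conv_rhs => unfold pref
  congr 1
  ext i
  simp only [mem_filter, mem_univ, true_and]
  constructor
  · rintro ⟨hfi, hi⟩
    refine ⟨?_, hfi⟩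
    by_contra! hti
    rcases hti.eq_or_lt with hti | hti
    · rw [show i = ⟨t, ht⟩ from Fin.ext hti.symm, hft] at hfi
      exact Bool.noConfusion hfi
    · have := pref_mono f (show t + 1 ≤ i from hti) true
      omega
  · rintro ⟨hi, hfi⟩
    have := pref_mono f hi.le true
    exact ⟨hfi, by omega⟩

lemma upX_eq_iff {n h a : ℕ} (f : Fin (n + n) → Bool) (hh : 1 ≤ h) (hf : h ≤ pref f (n + n) true)
    (ha : a + h ≤ n + n) :
    upX n h f = a ↔ pref f (a + h - 1) false = a ∧ pref f (a + h) false = a := by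
  constructor
  · rintro rfl
    obtain ⟨t, ht, hft, hpt⟩ := exists_upStep f hh hf
    rw [upX_eq_of_upStep f ht hft hpt]
    have htot := pref_false_add_pref_true f ht.le
    rw [show pref f t false + h - 1 = t by omega, show pref f t false + h = t + 1 by omega]
    exact ⟨rfl, (pref_succ_false_eq_iff f ht).2 hft⟩
  · rintro ⟨hprev, hnext⟩
    have ht : a + h - 1 < n + n := by omega
    have hft := (pref_succ_false_eq_iff f ht).1
      (by rw [show a + h - 1 + 1 = a + h by omega, hnext, hprev])
    have htot := pref_false_add_pref_true f ht.le
    rw [upX_eq_of_upStep f ht hft (by omega), hprev]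

lemma IsPath.pref_true {n : ℕ} {f : Fin (n + n) → Bool} (hf : IsPath n n f) :
    pref f (n + n) true = n := by
  have := pref_false_add_pref_true f le_rfl
  have := hf.1
  omega

lemma card_isPath_le_upX {n h a : ℕ} (hh : 1 ≤ h) (hhn : h ≤ n) (ha : a + h ≤ n + n) :
    #{f | IsPath n n f ∧ a ≤ upX n h f} =
      #{f | IsPath n n f ∧ a + 1 ≤ upX n h f} +
        #{f | IsPath n n f ∧ pref f (a + h - 1) false = a ∧ pref f (a + h) false = a} := by
  have hup {f} (hf : IsPath n n f) := upX_eq_iff f hh (by rw [hf.pref_true]; exact hhn) ha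
  rw [← card_union_of_disjoint, ← filter_or]
  · refine congrArg card (filter_congr fun f _ => ?_)
    by_cases hf : IsPath n n f
    · simp only [hf, true_and, ← hup hf]
      omega
    · simp [hf]
  · refine disjoint_filter.2 fun f _ h₁ h₂ => ?_
    have := (hup h₂.1).2 h₂.2
    omega

lemma card_isPath_through_upStep {n h a : ℕ} (hhn : h ≤ n) (ha : a + 1 ≤ h) :
    #{f | IsPath n n f ∧ pref f (a + h - 1) false = a ∧ pref f (a + h) false = a} =
      ballotN a (h - 1) * ballotN (n - h) (n - a) := by
  have := card_isShiftedPath_through_upStep (d := 0) (c := n) (a := a) (k := a + h - 1)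
    (l := n + n - (a + h)) (m := n + n) (by omega) (by omega)
  rw [show a + h - 1 + 1 = a + h by omega, show 0 + (a + h - a) - a = (n - a) - (n - h) by omega,
    show n + n - (a + h) = (n - a) + (n - h) by omega, show a + h - 1 = a + (h - 1) by omega,
    shiftedPathCount_zero_eq_ballotN (by omega), shiftedPathCount_sub_eq_ballotN (by omega)] at this
  rw [show a + h - 1 = a + (h - 1) by omega]
  -- `IsPath n n` is `IsShiftedPath 0 n` up to the defeq `x + 0 = x`.
  exact this

theorem stmt15_general (n h z : ℕ) (hzh : z ≤ h - 1) (hh : 1 ≤ h) (hhn : h ≤ n) :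
    Rpath n h (z + 1) - Rpath n h z = qprob n (h - z - 1) h ∧
    qprob n (h - z - 1) h =
      ((ballotN (h - z - 1) (h - 1) * ballotN (n - h) (n - h + z + 1) : ℕ) : ℝ) /
        (CatN n : ℝ) := by
  refine ⟨?_, ?_⟩
  · rw [Rpath, Rpath, qprob, show h - (z + 1) = h - z - 1 by omega,
      show h - z = h - z - 1 + 1 by omega, card_isPath_le_upX hh hhn (by omega)]
    push_cast
    ring
  · rw [qprob, card_isPath_through_upStep hhn (by omega), pathCount_eq_CatN,
      show n - (h - z - 1) = n - h + z + 1 by omega]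

/-- For `1 ≤ z ≤ h-1 ≤ n-1`,
`R_n(h,z+1) - R_n(h,z) = q_n(h-z-1,h) = f(h-z-1,h-1)·f(n-h,n-h+z+1)/Cat(n)`. -/
theorem stmt15 (n h z : ℕ) (hz : 1 ≤ z) (hzh : z ≤ h - 1) (hh : 1 ≤ h) (hhn : h ≤ n) :
    Rpath n h (z + 1) - Rpath n h z = qprob n (h - z - 1) h ∧
    qprob n (h - z - 1) h =
      ((ballotN (h - z - 1) (h - 1) * ballotN (n - h) (n - h + z + 1) : ℕ) : ℝ) /
        (CatN n : ℝ) :=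
  stmt15_general n h z hzh hh hhn
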